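/- (Corollary 1) Consider s agents acting independently, where each agent queries d bins chosen independently and uniformly at random (with replacement) from a set of n bins (n ≥ 1), of which a fixed subset S of k bins is available (k ≥ 1); each potentially happy agent selects one bin uniformly at random from the set of available bins it found, and H denotes the number of bins of S selected by at least one agent (the number of happy agents). Let σ = 1 - ((n-k)/n)^d and let r ∈ [0, 1]. If k · Σ_{f=1}^{s} [1 - ((k-1)/k)^f] · C(s, f) · σ^f · (1-σ)^{s-f} ≥ s · (1 - r), then E[H] ≥ s · (1 - r); that is, the expected decline ratio 1 - E[H]/s is at most r. -/
import Mathlib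


open Finset

/-- The set `Q` of available bins found by an agent whose queries are `g`:
`Q(g) = (range g) ∩ S`. -/
def foundBins {n d : ℕ} (S : Finset (Fin n)) (g : Fin d → Fin n) : Finset (Fin n) :=
  Finset.image g Finset.univ ∩ S

/-- The expected number of happy agents `E[H]`: the queries of the `s` agents form
a uniformly random `G : Fin s → (Fin d → Fin n)`; given `G`, each potentially
happy agent `i` independently selects a bin uniformly at random from
`Q_i = foundBins S (G i)`, so agent `i` selects bin `j` with probability
`1/|Q_i|` if `j ∈ Q_i` and `0` otherwise; `H` is the number of bins of `S`
selected by at least one agent. -/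
noncomputable def expectedHappy (n d s : ℕ) (S : Finset (Fin n)) : ℝ :=
  (∑ G : Fin s → Fin d → Fin n,
      ∑ j ∈ S,
        (1 - ∏ i : Fin s,
          (1 - (if j ∈ foundBins S (G i)
                then 1 / ((foundBins S (G i)).card : ℝ) else 0))))
    / ((n : ℝ) ^ d) ^ s

noncomputable def pfun {n d : ℕ} (S : Finset (Fin n)) (j : Fin n) (g : Fin d → Fin n) : ℝ :=
  if j ∈ foundBins S g then 1 / ((foundBins S g).card : ℝ) else 0

lemma sum_pfun_over_S {n d : ℕ} (S : Finset (Fin n)) (g : Fin d → Fin n) :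
    ∑ j ∈ S, pfun S j g = if (foundBins S g).Nonempty then 1 else 0 := by
  unfold pfun
  rw [Finset.sum_ite_mem]
  have hsub : S ∩ foundBins S g = foundBins S g := by
    apply Finset.inter_eq_right.mpr
    exact Finset.inter_subset_right
  rw [hsub, Finset.sum_const, nsmul_eq_mul]
  rcases (foundBins S g).eq_empty_or_nonempty with he | hne
  · simp [he]
  · rw [if_pos hne]
    have : ((foundBins S g).card : ℝ) ≠ 0 := by
      simp [Finset.card_ne_zero_of_mem hne.choose_spec]
    field_simp

lemma foundBins_swap {n d : ℕ} (S : Finset (Fin n)) {j j' : Fin n}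
    (hj : j ∈ S) (hj' : j' ∈ S) (g : Fin d → Fin n) :
    foundBins S ((Equiv.swap j j') ∘ g) = (foundBins S g).image (Equiv.swap j j') := by
  have hinj : Function.Injective (Equiv.swap j j') := (Equiv.swap j j').injective
  have hS : S.image (Equiv.swap j j') = S := by
    apply Finset.eq_of_subset_of_card_le
    · intro x hx
      simp only [Finset.mem_image] at hx
      obtain ⟨y, hy, rfl⟩ := hx
      rcases eq_or_ne y j with rfl | h1
      · simpa [Equiv.swap_apply_left] using hj'
      rcases eq_or_ne y j' with rfl | h2
      · simpa [Equiv.swap_apply_right] using hj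
      · simpa [Equiv.swap_apply_of_ne_of_ne h1 h2] using hy
    · rw [Finset.card_image_of_injective _ hinj]
  unfold foundBins
  rw [Finset.image_inter _ _ hinj, hS]
  congr 1
  rw [Finset.image_image]

lemma sum_pfun_symm {n d : ℕ} (S : Finset (Fin n)) {j j' : Fin n}
    (hj : j ∈ S) (hj' : j' ∈ S) :
    ∑ g : Fin d → Fin n, pfun S j g = ∑ g : Fin d → Fin n, pfun S j' g := by
  refine Fintype.sum_equiv (Equiv.arrowCongr (Equiv.refl (Fin d)) (Equiv.swap j j')) _ _ ?_
  intro g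
  have key : foundBins S ((Equiv.swap j j') ∘ g) = (foundBins S g).image (Equiv.swap j j') :=
    foundBins_swap S hj hj' g
  have harr : (Equiv.arrowCongr (Equiv.refl (Fin d)) (Equiv.swap j j')) g
      = (Equiv.swap j j') ∘ g := by
    ext i; simp [Equiv.arrowCongr]
  rw [harr]
  unfold pfun
  rw [key]
  have hmem : j' ∈ (foundBins S g).image (Equiv.swap j j') ↔ j ∈ foundBins S g := by
    constructor
    · intro hx
      simp only [Finset.mem_image] at hx
      obtain ⟨y, hy, hxy⟩ := hx
      have : y = j := by
        have := (Equiv.swap j j').injective (a₁ := y) (a₂ := j)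
        apply this
        rw [hxy, Equiv.swap_apply_left]
      rwa [this] at hy
    · intro hx
      exact Finset.mem_image.mpr ⟨j, hx, Equiv.swap_apply_left j j'⟩
  rw [Finset.card_image_of_injective _ (Equiv.swap j j').injective]
  by_cases hc : j ∈ foundBins S g
  · rw [if_pos (hmem.mpr hc), if_pos hc]
  · rw [if_neg (fun hx => hc (hmem.mp hx)), if_neg hc]

lemma count_empty {n d : ℕ} (S : Finset (Fin n)) :
    ∑ g : Fin d → Fin n, (if (foundBins S g).Nonempty then (1:ℝ) else 0)
      = (n : ℝ) ^ d - ((n - S.card : ℕ) : ℝ) ^ d := by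
  have h1 : ∑ g : Fin d → Fin n, (if (foundBins S g).Nonempty then (1:ℝ) else 0)
      = ((Finset.univ.filter fun g : Fin d → Fin n => (foundBins S g).Nonempty).card : ℝ) := by
    rw [Finset.sum_boole]
  rw [h1]
  have h2 : (Finset.univ.filter fun g : Fin d → Fin n => ¬ (foundBins S g).Nonempty)
      = Fintype.piFinset (fun _ : Fin d => Sᶜ) := by
    ext g
    simp only [Finset.mem_filter, Finset.mem_univ, true_and, Fintype.mem_piFinset,
      Finset.mem_compl, Finset.not_nonempty_iff_eq_empty]
    unfold foundBins
    constructor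
    · intro he i hi
      have : g i ∈ Finset.image g Finset.univ ∩ S :=
        Finset.mem_inter.mpr ⟨Finset.mem_image_of_mem g (Finset.mem_univ i), hi⟩
      simp [he] at this
    · intro hall
      rw [Finset.eq_empty_iff_forall_notMem]
      intro x hx
      obtain ⟨hx1, hx2⟩ := Finset.mem_inter.mp hx
      obtain ⟨i, _, rfl⟩ := Finset.mem_image.mp hx1
      exact hall i hx2
  have h3 := Finset.card_filter_add_card_filter_not
    (s := (Finset.univ : Finset (Fin d → Fin n)))
    (p := fun g => (foundBins S g).Nonempty)
  rw [h2] at h3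
  have h4 : (Fintype.piFinset (fun _ : Fin d => Sᶜ)).card = (n - S.card) ^ d := by
    rw [Fintype.card_piFinset]
    simp [Finset.card_compl]
  have h5 : (Finset.univ : Finset (Fin d → Fin n)).card = n ^ d := by
    simp
  rw [h4, h5] at h3
  have : ((Finset.univ.filter fun g : Fin d → Fin n => (foundBins S g).Nonempty).card : ℝ)
      = (n : ℝ)^d - ((n - S.card : ℕ) : ℝ)^d := by
    have := congrArg (fun x : ℕ => (x : ℝ)) h3
    push_cast at this ⊢
    linarith
  exact this

lemma sum_pfun_val {n d : ℕ} (S : Finset (Fin n)) {j : Fin n} (hj : j ∈ S) :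
    ∑ g : Fin d → Fin n, pfun S j g
      = ((n : ℝ) ^ d - ((n - S.card : ℕ) : ℝ) ^ d) / S.card := by
  have hk0 : (S.card : ℝ) ≠ 0 := by
    have : 0 < S.card := Finset.card_pos.mpr ⟨j, hj⟩
    positivity
  have htot : ∑ j' ∈ S, ∑ g : Fin d → Fin n, pfun S j' g
      = (n : ℝ) ^ d - ((n - S.card : ℕ) : ℝ) ^ d := by
    rw [Finset.sum_comm]
    rw [Finset.sum_congr rfl fun g _ => sum_pfun_over_S S g]
    exact count_empty S
  have hall : ∀ j' ∈ S, ∑ g : Fin d → Fin n, pfun S j' g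
      = ∑ g : Fin d → Fin n, pfun S j g := fun j' hj' => sum_pfun_symm S hj' hj
  rw [Finset.sum_congr rfl hall, Finset.sum_const, nsmul_eq_mul] at htot
  field_simp
  linarith [htot]

lemma expectedHappy_eq (n d s k : ℕ) (S : Finset (Fin n)) (hn : 1 ≤ n) (hk : 1 ≤ k)
    (hS : S.card = k) :
    expectedHappy n d s S
      = (k : ℝ) * (1 - (1 - (1 - (((n : ℝ) - (k : ℝ)) / (n : ℝ)) ^ d) / k) ^ s) := by
  have hkn : k ≤ n := hS ▸ (by simpa using S.card_le_univ)
  have hn0 : (0:ℝ) < (n : ℝ) ^ d := by positivity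
  have hk0 : (k : ℝ) ≠ 0 := by positivity
  set B : ℝ := (n : ℝ) ^ d with hB
  set M : ℝ := ((n - k : ℕ) : ℝ) ^ d with hM
  have hcast : ((n - k : ℕ) : ℝ) = (n : ℝ) - (k : ℝ) := by
    push_cast [Nat.cast_sub hkn]; ring
  set v : ℝ := (B - M) / k with hv
  have hin : ∀ j ∈ S, ∑ g : Fin d → Fin n, (1 - pfun S j g) = B - v := by
    intro j hj
    rw [Finset.sum_sub_distrib, Finset.sum_const, sum_pfun_val S hj, hS]
    simp only [Finset.card_univ, Fintype.card_pi, Fintype.card_fin, Finset.prod_const,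
      Finset.card_fin, nsmul_eq_mul, mul_one]
    push_cast
    rw [hv, hB, hM]
  have hfac : ∀ j ∈ S, ∑ G : Fin s → Fin d → Fin n, ∏ i : Fin s, (1 - pfun S j (G i))
      = (B - v) ^ s := by
    intro j hj
    rw [← Fintype.piFinset_univ, ← Finset.prod_univ_sum (fun _ : Fin s => (Finset.univ : Finset (Fin d → Fin n))) (fun _ g => 1 - pfun S j g)]
    rw [Finset.prod_congr rfl fun i _ => hin j hj, Finset.prod_const, Finset.card_univ,
      Fintype.card_fin]
  have key : expectedHappy n d s S = (k : ℝ) * (B ^ s - (B - v) ^ s) / B ^ s := by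
    unfold expectedHappy
    simp only [show ∀ (j : Fin n) (g : Fin d → Fin n),
      (if j ∈ foundBins S g then 1 / ((foundBins S g).card : ℝ) else 0) = pfun S j g
      from fun _ _ => rfl]
    rw [Finset.sum_comm]
    have : ∀ j ∈ S, (∑ G : Fin s → Fin d → Fin n,
        (1 - ∏ i : Fin s, (1 - pfun S j (G i)))) = B ^ s - (B - v) ^ s := by
      intro j hj
      rw [Finset.sum_sub_distrib, Finset.sum_const, hfac j hj]
      simp only [Finset.card_univ, Fintype.card_pi, Fintype.card_fin, Finset.prod_const,
        Finset.card_fin, nsmul_eq_mul, mul_one]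
      push_cast
      rw [hB]
    rw [Finset.sum_congr rfl this, Finset.sum_const, hS, nsmul_eq_mul, hB]
  rw [key]
  have hBs : B ^ s ≠ 0 := by positivity
  have hσ : 1 - (1 - (((n : ℝ) - (k : ℝ)) / (n : ℝ)) ^ d) / k = (B - v) / B := by
    rw [hv, hB, div_pow, ← hcast]
    have hnding : ((n:ℝ))^d ≠ 0 := ne_of_gt hn0
    field_simp
    rw [hM, hcast]
  rw [hσ, div_pow]
  field_simp

lemma binom_sum (s k : ℕ) (hk : 1 ≤ k) (x : ℝ) :
    ∑ f ∈ Finset.Icc 1 s,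
      (1 - (((k : ℝ) - 1) / (k : ℝ)) ^ f) * (s.choose f : ℝ) * x ^ f * (1 - x) ^ (s - f)
    = 1 - (1 - x / k) ^ s := by
  have hk0 : (k:ℝ) ≠ 0 := by positivity
  set c : ℝ := ((k:ℝ)-1)/k with hc
  have hsplit : ∀ f, (1 - c ^ f) * (s.choose f : ℝ) * x ^ f * (1 - x) ^ (s - f)
      = x ^ f * (1-x)^(s-f) * (s.choose f : ℝ)
        - (c*x) ^ f * (1-x)^(s-f) * (s.choose f : ℝ) := by
    intro f; rw [mul_pow]; ring
  have hIcc : ∑ f ∈ Finset.Icc 1 s, ((1 - c ^ f) * (s.choose f : ℝ) * x ^ f * (1 - x) ^ (s - f))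
      = ∑ f ∈ Finset.range (s+1), ((1 - c ^ f) * (s.choose f : ℝ) * x ^ f * (1 - x) ^ (s - f)) := by
    apply Finset.sum_subset
    · intro f hf
      simp only [Finset.mem_Icc] at hf
      exact Finset.mem_range.mpr (Nat.lt_succ_of_le hf.2)
    · intro f hf hnot
      simp only [Finset.mem_Icc, Finset.mem_range] at hf hnot
      have : f = 0 := by omega
      simp [this]
  rw [hIcc, Finset.sum_congr rfl fun f _ => hsplit f, Finset.sum_sub_distrib]
  rw [← add_pow x (1-x) s, ← add_pow (c*x) (1-x) s]
  have h2 : c * x + (1 - x) = 1 - x / k := by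
    rw [hc]; field_simp; ring
  rw [h2]
  norm_num


/-- Corollary 1: with `σ = 1 - ((n-k)/n)^d` and `r ∈ [0,1]`, if
`k · Σ_{f=1}^{s} [1 - ((k-1)/k)^f] · C(s,f) · σ^f · (1-σ)^(s-f) ≥ s·(1-r)`, then
`E[H] ≥ s·(1-r)`, i.e. the expected decline ratio `1 - E[H]/s` is at most `r`. -/
theorem stmt7 (n d k s : ℕ) (hn : 1 ≤ n) (hk : 1 ≤ k) (hs : 1 ≤ s)
    (S : Finset (Fin n)) (hS : S.card = k)
    (r : ℝ) (hr0 : 0 ≤ r) (hr1 : r ≤ 1)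
    (h : (k : ℝ) * ∑ f ∈ Finset.Icc 1 s,
          (1 - (((k : ℝ) - 1) / (k : ℝ)) ^ f) * (s.choose f : ℝ) *
            (1 - (((n : ℝ) - (k : ℝ)) / (n : ℝ)) ^ d) ^ f *
            (1 - (1 - (((n : ℝ) - (k : ℝ)) / (n : ℝ)) ^ d)) ^ (s - f)
        ≥ (s : ℝ) * (1 - r)) :
    expectedHappy n d s S ≥ (s : ℝ) * (1 - r) ∧
    1 - expectedHappy n d s S / (s : ℝ) ≤ r := by
  have hE := expectedHappy_eq n d s k S hn hk hS
  have hb := binom_sum s k hk (1 - (((n:ℝ)-(k:ℝ))/(n:ℝ))^d)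
  rw [hb] at h
  rw [hE]
  refine ⟨h, ?_⟩
  have hs0 : (0:ℝ) < s := by positivity
  have hdiv : (1 - r) ≤ ((k : ℝ) * (1 - (1 - (1 - (((n : ℝ) - (k : ℝ)) / (n : ℝ)) ^ d) / k) ^ s)) / s := by
    rw [le_div_iff₀ hs0]
    linarith [h]
  linarith [hdiv]
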